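/- arXiv:1104.1060 — 4 statements merged into one kernel-verified Lean document; each statement's English description precedes it below -/
import Mathlib

section
/- Let n ≥ 1 and let f : [0,∞)^{n+1} → ℝ be non-decreasing (in each coordinate) and (i,j)-convex for all 1 ≤ i,j ≤ n+1. Then the diagonal restriction g : [0,∞)^n → ℝ defined by g(x₁,...,x_n) := f(x₁,...,x_n,x_n) is non-decreasing and (i,j)-convex for all 1 ≤ i,j ≤ n. -/
/-- Identifying the last two coordinates of a non-decreasing, directionally convex
function on `[0,∞)^{n+1}` yields a non-decreasing, directionally convex function
on `[0,∞)^n`. -/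
theorem stmt_1 (n : ℕ) (hn : 1 ≤ n)
    (f : (Fin (n + 1) → ℝ) → ℝ)
    (hmono : ∀ x y : Fin (n + 1) → ℝ, (∀ l, 0 ≤ x l) → (∀ l, x l ≤ y l) → f x ≤ f y)
    (hconv : ∀ (i j : Fin (n + 1)) (x : Fin (n + 1) → ℝ), (∀ l, 0 ≤ x l) →
      ∀ h₁ h₂ : ℝ, 0 ≤ h₁ → 0 ≤ h₂ →
      0 ≤ f (x + Pi.single i h₁ + Pi.single j h₂) - f (x + Pi.single i h₁)
            - f (x + Pi.single j h₂) + f x) :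
    ∀ g : (Fin n → ℝ) → ℝ,
      (∀ x : Fin n → ℝ, g x = f (Fin.snoc x (x ⟨n - 1, by omega⟩))) →
      ((∀ x y : Fin n → ℝ, (∀ l, 0 ≤ x l) → (∀ l, x l ≤ y l) → g x ≤ g y) ∧
       (∀ (i j : Fin n) (x : Fin n → ℝ), (∀ l, 0 ≤ x l) →
         ∀ h₁ h₂ : ℝ, 0 ≤ h₁ → 0 ≤ h₂ →
         0 ≤ g (x + Pi.single i h₁ + Pi.single j h₂) - g (x + Pi.single i h₁)
               - g (x + Pi.single j h₂) + g x)) := by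
  intro g hg
  have K : Fin n := ⟨n - 1, by omega⟩
  -- adding a nonneg single preserves nonnegativity
  have hz_add : ∀ (z : Fin (n + 1) → ℝ) (c : Fin (n + 1)) (hc : ℝ),
      (∀ l, 0 ≤ z l) → 0 ≤ hc → ∀ l : Fin (n + 1), (0:ℝ) ≤ ((z + Pi.single c hc : Fin (n + 1) → ℝ)) l := by
    intro z c hc hz h0 l
    have h1 : (0:ℝ) ≤ (Pi.single c hc : Fin (n + 1) → ℝ) l := by
      rw [Pi.single_apply]
      split
      · exact h0
      · exact le_refl 0
    simpa using add_nonneg (hz l) h1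
  -- three-point lemma
  have L2 : ∀ (a c d : Fin (n + 1)) (z : Fin (n + 1) → ℝ), (∀ l, 0 ≤ z l) →
      ∀ h hc hd : ℝ, 0 ≤ h → 0 ≤ hc → 0 ≤ hd →
      0 ≤ f (z + Pi.single a h + Pi.single c hc + Pi.single d hd)
        - f (z + Pi.single a h) - f (z + Pi.single c hc + Pi.single d hd) + f z := by
    intro a c d z hz h hc hd h0 hc0 hd0
    have A := hconv a d (z + Pi.single c hc) (hz_add z c hc hz hc0) h hd h0 hd0
    have B := hconv a c z hz h hc h0 hc0
    have e1 : z + Pi.single c hc + Pi.single a h + Pi.single d hd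
        = z + Pi.single a h + Pi.single c hc + Pi.single d hd := by abel
    have e2 : z + Pi.single c hc + Pi.single a h
        = z + Pi.single a h + Pi.single c hc := by abel
    rw [e1, e2] at A
    linarith
  -- four-point lemma
  have L4 : ∀ (a b c d : Fin (n + 1)) (z : Fin (n + 1) → ℝ), (∀ l, 0 ≤ z l) →
      ∀ ha hb hc hd : ℝ, 0 ≤ ha → 0 ≤ hb → 0 ≤ hc → 0 ≤ hd →
      0 ≤ f (z + Pi.single a ha + Pi.single b hb + Pi.single c hc + Pi.single d hd)
        - f (z + Pi.single a ha + Pi.single b hb)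
        - f (z + Pi.single c hc + Pi.single d hd) + f z := by
    intro a b c d z hz ha hb hc hd ha0 hb0 hc0 hd0
    have A := L2 b c d (z + Pi.single a ha) (hz_add z a ha hz ha0) hb hc hd hb0 hc0 hd0
    have B := L2 a c d z hz ha hc hd ha0 hc0 hd0
    linarith
  -- nonnegativity of the snoc of a nonneg vector
  have hTnn : ∀ x : Fin n → ℝ, (∀ l, 0 ≤ x l) →
      ∀ l, (0:ℝ) ≤ (Fin.snoc x (x ⟨n - 1, by omega⟩) : Fin (n + 1) → ℝ) l := by
    intro x hx l
    induction l using Fin.lastCases with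
    | last => simpa using hx _
    | cast m => simpa using hx m
  -- shift lemma
  have hshift : ∀ (x : Fin n → ℝ) (i : Fin n) (h : ℝ),
      (Fin.snoc (x + Pi.single i h) ((x + Pi.single i h : Fin n → ℝ) ⟨n - 1, by omega⟩)
        : Fin (n + 1) → ℝ)
      = (Fin.snoc x (x ⟨n - 1, by omega⟩) : Fin (n + 1) → ℝ)
          + (Pi.single (Fin.castSucc i) h : Fin (n + 1) → ℝ)
          + (Pi.single (Fin.last n) (if (⟨n - 1, by omega⟩ : Fin n) = i then h else 0)
              : Fin (n + 1) → ℝ) := by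
    intro x i h
    funext l
    induction l using Fin.lastCases with
    | last =>
        have h1 : (Pi.single (Fin.castSucc i) h : Fin (n + 1) → ℝ) (Fin.last n) = 0 := by
          rw [Pi.single_apply, if_neg]
          exact (Fin.castSucc_lt_last i).ne'
        simp only [Fin.snoc_last, Pi.add_apply, h1, Pi.single_apply]
        simp
    | cast m =>
        have h1 : (Pi.single (Fin.last n) (if (⟨n - 1, by omega⟩ : Fin n) = i then h else 0)
            : Fin (n + 1) → ℝ) (Fin.castSucc m) = 0 := by
          rw [Pi.single_apply, if_neg]
          exact (Fin.castSucc_lt_last m).ne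
        have h2 : (Pi.single (Fin.castSucc i) h : Fin (n + 1) → ℝ) (Fin.castSucc m) = (Pi.single i h : Fin n → ℝ) m := by
          simp [Pi.single_apply, Fin.castSucc_inj]
        simp [h1, h2]
  refine ⟨?_, ?_⟩
  · -- monotonicity
    intro x y hx hxy
    rw [hg x, hg y]
    apply hmono _ _ (hTnn x hx)
    intro l
    induction l using Fin.lastCases with
    | last => simpa using hxy _
    | cast m => simpa using hxy m
  · -- directional convexity
    intro i j x hx h₁ h₂ h₁0 h₂0
    have e2 := hshift x i h₁
    have e3 := hshift x j h₂
    have e1 := hshift (x + Pi.single i h₁) j h₂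
    rw [e2] at e1
    set δi : ℝ := if (⟨n - 1, by omega⟩ : Fin n) = i then h₁ else 0 with hδi
    set δj : ℝ := if (⟨n - 1, by omega⟩ : Fin n) = j then h₂ else 0 with hδj
    have hδi0 : 0 ≤ δi := by rw [hδi]; split <;> [exact h₁0; exact le_refl 0]
    have hδj0 : 0 ≤ δj := by rw [hδj]; split <;> [exact h₂0; exact le_refl 0]
    have key := L4 (Fin.castSucc i) (Fin.last n) (Fin.castSucc j) (Fin.last n)
      (Fin.snoc x (x ⟨n - 1, by omega⟩)) (hTnn x hx) h₁ δi h₂ δj h₁0 hδi0 h₂0 hδj0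
    rw [hg, hg, hg, hg, e1, e2, e3]
    exact key
end

section
/- Let I ⊆ [0,∞) be an interval containing 0, let μ : I → ℝ be subadditive (μ(x+y) ≤ μ(x) + μ(y) whenever x, y, x+y ∈ I), and let σ² : I → [0,∞) be superadditive (σ²(x+y) ≥ σ²(x) + σ²(y)). For c ≥ 0 define the operator (G^{(c)}f)(x) := (c - x + μ(x))f'(x) + ½σ²(x)f''(x) for f ∈ C². Suppose c ≤ c₁ + c₂ with c, c₁, c₂ ∈ I. Then for every C² function f that is non-decreasing (f' ≥ 0) and concave (f'' ≤ 0), and all x, y with x, y, x+y ∈ I: (G^{(c)}f)(x+y) ≤ (G^{(c₁)}(f(·+y)))(x) + (G^{(c₂)}(f(x+·)))(y). -/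
/-- Generator inequality (Lemma `generator_estimate`, superadditive case):
for `μ` subadditive, `σ²` superadditive, `c ≤ c₁ + c₂`, and `f` a `C²` function
which is non-decreasing and concave,
`(G^{(c)}f)(x+y) ≤ (G^{(c₁)}(f(·+y)))(x) + (G^{(c₂)}(f(x+·)))(y)`. -/
theorem stmt_3 (I : Set ℝ) (hI0 : (0:ℝ) ∈ I) (hInn : I ⊆ Set.Ici 0)
    (hIord : I.OrdConnected)
    (μ σ2 : ℝ → ℝ)
    (hσnn : ∀ x ∈ I, 0 ≤ σ2 x)
    (hμsub : ∀ x ∈ I, ∀ y ∈ I, x + y ∈ I → μ (x + y) ≤ μ x + μ y)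
    (hσsuper : ∀ x ∈ I, ∀ y ∈ I, x + y ∈ I → σ2 x + σ2 y ≤ σ2 (x + y))
    (c c₁ c₂ : ℝ) (hc : c ∈ I) (hc₁ : c₁ ∈ I) (hc₂ : c₂ ∈ I) (hcc : c ≤ c₁ + c₂)
    (f f' f'' : ℝ → ℝ)
    (hf' : ∀ z, HasDerivAt f (f' z) z)
    (hf'' : ∀ z, HasDerivAt f' (f'' z) z)
    (hf''cont : Continuous f'')
    (hmono : ∀ z, 0 ≤ f' z) (hconc : ∀ z, f'' z ≤ 0)
    (x y : ℝ) (hx : x ∈ I) (hy : y ∈ I) (hxy : x + y ∈ I) :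
    (c - (x + y) + μ (x + y)) * f' (x + y) + σ2 (x + y) / 2 * f'' (x + y) ≤
      ((c₁ - x + μ x) * f' (x + y) + σ2 x / 2 * f'' (x + y)) +
        ((c₂ - y + μ y) * f' (x + y) + σ2 y / 2 * f'' (x + y)) := by
  have hμ := hμsub x hx y hy hxy
  have hσ := hσsuper x hx y hy hxy
  have h1 := hmono (x + y)
  have h2 := hconc (x + y)
  nlinarith [mul_nonneg (sub_nonneg.2 (add_le_add (sub_nonneg.2 hcc) hμ)) h1, mul_nonpos_of_nonneg_of_nonpos (sub_nonneg.2 hσ) h2]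
end

section
/- Under the same setup as the generator inequality but with σ² subadditive (σ²(x+y) ≤ σ²(x) + σ²(y)) instead of superadditive: for every C² function f with f' ≥ 0 and f'' ≥ 0 (non-decreasing and convex), and all x, y, x+y ∈ I and c ≤ c₁ + c₂, one has (G^{(c)}f)(x+y) ≤ (G^{(c₁)}(f(·+y)))(x) + (G^{(c₂)}(f(x+·)))(y). -/
/-- Generator inequality (Lemma `generator_estimate`, subadditive case):
for `μ` subadditive, `σ²` subadditive, `c ≤ c₁ + c₂`, and `f` a `C²` function
which is non-decreasing and convex,
`(G^{(c)}f)(x+y) ≤ (G^{(c₁)}(f(·+y)))(x) + (G^{(c₂)}(f(x+·)))(y)`. -/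
theorem stmt_4 (I : Set ℝ) (hI0 : (0:ℝ) ∈ I) (hInn : I ⊆ Set.Ici 0)
    (hIord : I.OrdConnected)
    (μ σ2 : ℝ → ℝ)
    (hσnn : ∀ x ∈ I, 0 ≤ σ2 x)
    (hμsub : ∀ x ∈ I, ∀ y ∈ I, x + y ∈ I → μ (x + y) ≤ μ x + μ y)
    (hσsub : ∀ x ∈ I, ∀ y ∈ I, x + y ∈ I → σ2 (x + y) ≤ σ2 x + σ2 y)
    (c c₁ c₂ : ℝ) (hc : c ∈ I) (hc₁ : c₁ ∈ I) (hc₂ : c₂ ∈ I) (hcc : c ≤ c₁ + c₂)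
    (f f' f'' : ℝ → ℝ)
    (hf' : ∀ z, HasDerivAt f (f' z) z)
    (hf'' : ∀ z, HasDerivAt f' (f'' z) z)
    (hf''cont : Continuous f'')
    (hmono : ∀ z, 0 ≤ f' z) (hconv : ∀ z, 0 ≤ f'' z)
    (x y : ℝ) (hx : x ∈ I) (hy : y ∈ I) (hxy : x + y ∈ I) :
    (c - (x + y) + μ (x + y)) * f' (x + y) + σ2 (x + y) / 2 * f'' (x + y) ≤
      ((c₁ - x + μ x) * f' (x + y) + σ2 x / 2 * f'' (x + y)) +
        ((c₂ - y + μ y) * f' (x + y) + σ2 y / 2 * f'' (x + y)) := by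
  have h1 := hμsub x hx y hy hxy
  have h2 := hσsub x hx y hy hxy
  nlinarith [hmono (x + y), hconv (x + y), mul_le_mul_of_nonneg_right h1 (hmono (x+y)),
    mul_le_mul_of_nonneg_right h2 (hconv (x+y)),
    mul_le_mul_of_nonneg_right hcc (hmono (x+y))]
end

section
/- Preservation of monotone structure by Poisson functionals: for z = (z₁,...,z_m) ∈ [0,∞)^m let Π^{(z)} be a Poisson point process on a measurable space S with intensity Σᵢ zᵢμᵢ, where μ₁,...,μ_m are fixed σ-finite measures, and let g : S → [0,∞) be measurable with ⟨g, Π^{(z)}⟩ := ∫g dΠ^{(z)} a.s. finite. If f : [0,∞)^{n+1} → ℝ is non-decreasing, bounded, and (i,j)-convex for all 1 ≤ i,j ≤ n+1, then the function (x,z) ↦ E[f(x, ⟨g,Π^{(z)}⟩)] on [0,∞)^{n+m} is non-decreasing and (i,j)-convex for all 1 ≤ i,j ≤ n+m. -/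
/-!
Superposition says `ν (z + z') = ν z ∗ ν z'`, and everything rests on one inequality: if `φ` is
non-decreasing on `[0, ∞)` and `μ`, `ν` live on `[0, ∞)`, then `∫ φ ∂μ ≤ ∫ φ ∂(μ ∗ ν)`, since
`φ (a + b) ≥ φ a` on the support of `μ.prod ν`. Monotonicity in `z` is this for `φ = f x`, mixed
convexity is this for `φ = f (x + h eᵢ) - f x`, and convexity in `z` is this for the expected
increment `a ↦ ∫ (f x (a + b) - f x a) dν(h eⱼ)(b)`, which is non-decreasing because `f` is
convex in its last coordinate. Convexity in `x` holds pointwise and survives integration.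
-/

open MeasureTheory

lemma integrable_of_abs_le {α : Type*} [MeasurableSpace α] {μ : Measure α} [IsFiniteMeasure μ]
    {g : α → ℝ} {C : ℝ} (hg : Measurable g) (hgC : ∀ a, |g a| ≤ C) : Integrable g μ :=
  .of_bound hg.aestronglyMeasurable C (.of_forall hgC)

lemma integral_second_difference_nonneg {α : Type*} [MeasurableSpace α] {μ : Measure α}
    {g₁ g₂ g₃ g₄ : α → ℝ} (h₁ : Integrable g₁ μ) (h₂ : Integrable g₂ μ) (h₃ : Integrable g₃ μ)
    (h₄ : Integrable g₄ μ) (hg : ∀ᵐ a ∂μ, 0 ≤ g₁ a - g₂ a - g₃ a + g₄ a) :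
    0 ≤ ∫ a, g₁ a ∂μ - ∫ a, g₂ a ∂μ - ∫ a, g₃ a ∂μ + ∫ a, g₄ a ∂μ := by
  have h := integral_nonneg_of_ae hg
  have h₁₂ : Integrable (fun a => g₁ a - g₂ a) μ := h₁.sub h₂
  have h₁₂₃ : Integrable (fun a => g₁ a - g₂ a - g₃ a) μ := h₁₂.sub h₃
  rw [integral_add h₁₂₃ h₄, integral_sub h₁₂ h₃, integral_sub h₁ h₂] at h
  exact h

section Convolution

variable {μ ν : Measure ℝ} {φ : ℝ → ℝ} {C : ℝ}

variable [IsProbabilityMeasure μ] [IsProbabilityMeasure ν]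

lemma integral_conv_sub_integral (hφ : Measurable φ) (hφC : ∀ w, |φ w| ≤ C) :
    ∫ w, φ w ∂(μ ∗ ν) - ∫ w, φ w ∂μ = ∫ a, ∫ b, (φ (a + b) - φ a) ∂ν ∂μ := by
  have hconv : ∫ w, φ w ∂(μ ∗ ν) = ∫ p, φ (p.1 + p.2) ∂(μ.prod ν) :=
    integral_map measurable_add.aemeasurable hφ.aestronglyMeasurable
  have hfst : ∫ w, φ w ∂μ = ∫ p, φ p.1 ∂(μ.prod ν) := by simp [integral_fun_fst]
  have hint_add : Integrable (fun p : ℝ × ℝ => φ (p.1 + p.2)) (μ.prod ν) :=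
    integrable_of_abs_le (by fun_prop) fun _ => hφC _
  have hint_fst : Integrable (fun p : ℝ × ℝ => φ p.1) (μ.prod ν) :=
    integrable_of_abs_le (by fun_prop) fun _ => hφC _
  rw [hconv, hfst, ← integral_sub hint_add hint_fst]
  exact integral_prod (fun p => φ (p.1 + p.2) - φ p.1) (hint_add.sub hint_fst)

lemma integral_le_integral_conv (hμ : ∀ᵐ a ∂μ, 0 ≤ a) (hν : ∀ᵐ b ∂ν, 0 ≤ b)
    (hφ : Measurable φ) (hφC : ∀ w, |φ w| ≤ C)
    (hφ_mono : ∀ a b, 0 ≤ a → 0 ≤ b → φ a ≤ φ (a + b)) :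
    ∫ w, φ w ∂μ ≤ ∫ w, φ w ∂(μ ∗ ν) := by
  rw [← sub_nonneg, integral_conv_sub_integral hφ hφC]
  refine integral_nonneg_of_ae ?_
  filter_upwards [hμ] with a ha
  refine integral_nonneg_of_ae ?_
  filter_upwards [hν] with b hb
  exact sub_nonneg.2 (hφ_mono a b ha hb)

lemma integral_conv_cross_difference_nonneg {φ₀ φ₁ : ℝ → ℝ} (hμ : ∀ᵐ a ∂μ, 0 ≤ a)
    (hν : ∀ᵐ b ∂ν, 0 ≤ b) (hφ₀ : Measurable φ₀) (hφ₁ : Measurable φ₁) (hφ₀C : ∀ w, |φ₀ w| ≤ C)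
    (hφ₁C : ∀ w, |φ₁ w| ≤ C)
    (hcross : ∀ a b, 0 ≤ a → 0 ≤ b → 0 ≤ φ₁ (a + b) - φ₁ a - φ₀ (a + b) + φ₀ a) :
    0 ≤ ∫ w, φ₁ w ∂(μ ∗ ν) - ∫ w, φ₁ w ∂μ - ∫ w, φ₀ w ∂(μ ∗ ν) + ∫ w, φ₀ w ∂μ := by
  have hle := integral_le_integral_conv (μ := μ) (ν := ν) (φ := φ₁ - φ₀) (C := C + C) hμ hν
    (hφ₁.sub hφ₀) (fun w => (abs_sub _ _).trans (add_le_add (hφ₁C w) (hφ₀C w)))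
    (fun a b ha hb => by simp only [Pi.sub_apply]; linarith [hcross a b ha hb])
  simp only [Pi.sub_apply] at hle
  rw [integral_sub (integrable_of_abs_le hφ₁ hφ₁C) (integrable_of_abs_le hφ₀ hφ₀C),
    integral_sub (integrable_of_abs_le hφ₁ hφ₁C) (integrable_of_abs_le hφ₀ hφ₀C)] at hle
  linarith

lemma integral_conv_conv_second_difference_nonneg {ρ : Measure ℝ} [IsProbabilityMeasure ρ]
    (hμ : ∀ᵐ a ∂μ, 0 ≤ a) (hρ : ∀ᵐ b ∂ρ, 0 ≤ b) (hν : ∀ᵐ c ∂ν, 0 ≤ c)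
    (hφ : Measurable φ) (hφC : ∀ w, |φ w| ≤ C)
    (hφ_convex : ∀ a b c, 0 ≤ a → 0 ≤ b → 0 ≤ c →
      0 ≤ φ (a + b + c) - φ (a + b) - φ (a + c) + φ a) :
    0 ≤ ∫ w, φ w ∂((μ ∗ ρ) ∗ ν) - ∫ w, φ w ∂(μ ∗ ρ) - ∫ w, φ w ∂(μ ∗ ν) + ∫ w, φ w ∂μ := by
  have hincrC : ∀ a c, |φ (a + c) - φ a| ≤ C + C := fun a c =>
    (abs_sub _ _).trans (add_le_add (hφC _) (hφC _))
  have hincr : ∀ a, Integrable (fun c => φ (a + c) - φ a) ν := fun a =>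
    integrable_of_abs_le (by fun_prop) (hincrC a)
  -- Both differences in the goal are integrals of `D` (against `μ ∗ ρ` and against `μ`), and
  -- convexity of `φ` makes `D` non-decreasing on `[0, ∞)`.
  set D : ℝ → ℝ := fun a => ∫ c, (φ (a + c) - φ a) ∂ν
  have hD : Measurable D :=
    (((hφ.comp measurable_add).sub (hφ.comp measurable_fst)).stronglyMeasurable
      |>.integral_prod_right' (ν := ν)).measurable
  have hDC : ∀ a, |D a| ≤ C + C := fun a => by
    simpa using norm_integral_le_of_norm_le_const (μ := ν)
      (.of_forall fun c => (Real.norm_eq_abs _).trans_le (hincrC a c))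
  have hD_mono : ∀ a b, 0 ≤ a → 0 ≤ b → D a ≤ D (a + b) := fun a b ha hb => by
    refine integral_mono_ae (hincr a) (hincr (a + b)) ?_
    filter_upwards [hν] with c hc
    linarith [hφ_convex a b c ha hb hc]
  have hle := integral_le_integral_conv hμ hρ hD hDC hD_mono
  rw [← integral_conv_sub_integral hφ hφC, ← integral_conv_sub_integral hφ hφC] at hle
  linarith

end Convolution

theorem stmt_11_general (n m : ℕ)
    (ν : (Fin m → ℝ) → Measure ℝ)
    (hprob : ∀ z : Fin m → ℝ, (∀ l, 0 ≤ z l) → IsProbabilityMeasure (ν z))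
    (hsupp : ∀ z : Fin m → ℝ, (∀ l, 0 ≤ z l) → ν z (Set.Iio 0) = 0)
    (hadd : ∀ z z' : Fin m → ℝ, (∀ l, 0 ≤ z l) → (∀ l, 0 ≤ z' l) →
      ν (z + z') = Measure.map (fun p : ℝ × ℝ => p.1 + p.2) ((ν z).prod (ν z')))
    (f : (Fin n → ℝ) → ℝ → ℝ)
    (hfmeas : ∀ x, Measurable (f x))
    (hfbdd : ∃ C, ∀ x w, |f x w| ≤ C)
    (hfmono : ∀ x x' : Fin n → ℝ, ∀ w w' : ℝ, (∀ l, 0 ≤ x l) → 0 ≤ w →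
      (∀ l, x l ≤ x' l) → w ≤ w' → f x w ≤ f x' w')
    (hconv_xx : ∀ (i j : Fin n) (x : Fin n → ℝ) (w : ℝ), (∀ l, 0 ≤ x l) → 0 ≤ w →
      ∀ h₁ h₂ : ℝ, 0 ≤ h₁ → 0 ≤ h₂ →
      0 ≤ f (x + Pi.single i h₁ + Pi.single j h₂) w - f (x + Pi.single i h₁) w
            - f (x + Pi.single j h₂) w + f x w)
    (hconv_xw : ∀ (i : Fin n) (x : Fin n → ℝ) (w : ℝ), (∀ l, 0 ≤ x l) → 0 ≤ w →
      ∀ h₁ h₂ : ℝ, 0 ≤ h₁ → 0 ≤ h₂ →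
      0 ≤ f (x + Pi.single i h₁) (w + h₂) - f (x + Pi.single i h₁) w
            - f x (w + h₂) + f x w)
    (hconv_ww : ∀ (x : Fin n → ℝ) (w : ℝ), (∀ l, 0 ≤ x l) → 0 ≤ w →
      ∀ h₁ h₂ : ℝ, 0 ≤ h₁ → 0 ≤ h₂ →
      0 ≤ f x (w + h₁ + h₂) - f x (w + h₁) - f x (w + h₂) + f x w) :
    -- the function (x, z) ↦ ∫ w, f x w ∂(ν z) is non-decreasing …
    (∀ (x x' : Fin n → ℝ) (z z' : Fin m → ℝ),
      (∀ l, 0 ≤ x l) → (∀ l, 0 ≤ z l) → (∀ l, x l ≤ x' l) → (∀ l, z l ≤ z' l) →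
      (∫ w, f x w ∂(ν z)) ≤ ∫ w, f x' w ∂(ν z')) ∧
    -- … (i,j)-convex in the first n coordinates …
    (∀ (i j : Fin n) (x : Fin n → ℝ) (z : Fin m → ℝ),
      (∀ l, 0 ≤ x l) → (∀ l, 0 ≤ z l) → ∀ h₁ h₂ : ℝ, 0 ≤ h₁ → 0 ≤ h₂ →
      0 ≤ (∫ w, f (x + Pi.single i h₁ + Pi.single j h₂) w ∂(ν z))
            - (∫ w, f (x + Pi.single i h₁) w ∂(ν z))
            - (∫ w, f (x + Pi.single j h₂) w ∂(ν z)) + ∫ w, f x w ∂(ν z)) ∧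
    -- … (i, n+j)-convex in mixed coordinates …
    (∀ (i : Fin n) (j : Fin m) (x : Fin n → ℝ) (z : Fin m → ℝ),
      (∀ l, 0 ≤ x l) → (∀ l, 0 ≤ z l) → ∀ h₁ h₂ : ℝ, 0 ≤ h₁ → 0 ≤ h₂ →
      0 ≤ (∫ w, f (x + Pi.single i h₁) w ∂(ν (z + Pi.single j h₂)))
            - (∫ w, f (x + Pi.single i h₁) w ∂(ν z))
            - (∫ w, f x w ∂(ν (z + Pi.single j h₂))) + ∫ w, f x w ∂(ν z)) ∧
    -- … and (n+i, n+j)-convex in the last m coordinates.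
    (∀ (i j : Fin m) (x : Fin n → ℝ) (z : Fin m → ℝ),
      (∀ l, 0 ≤ x l) → (∀ l, 0 ≤ z l) → ∀ h₁ h₂ : ℝ, 0 ≤ h₁ → 0 ≤ h₂ →
      0 ≤ (∫ w, f x w ∂(ν (z + Pi.single i h₁ + Pi.single j h₂)))
            - (∫ w, f x w ∂(ν (z + Pi.single i h₁)))
            - (∫ w, f x w ∂(ν (z + Pi.single j h₂))) + ∫ w, f x w ∂(ν z)) := by
  obtain ⟨C, hC⟩ := hfbdd
  have hν_nonneg : ∀ z : Fin m → ℝ, (∀ l, 0 ≤ z l) → ∀ᵐ w ∂ν z, 0 ≤ w := fun z hz =>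
    (measure_eq_zero_iff_ae_notMem.1 (hsupp z hz)).mono fun _ hw => not_lt.1 hw
  have hconv : ∀ z z' : Fin m → ℝ, (∀ l, 0 ≤ z l) → (∀ l, 0 ≤ z' l) →
      ν (z + z') = ν z ∗ ν z' := hadd
  have hsingle : ∀ (k : Fin m) {h : ℝ}, 0 ≤ h → ∀ l, 0 ≤ (Pi.single k h : Fin m → ℝ) l :=
    fun k _ hh l => by by_cases hl : l = k <;> simp [hl, hh]
  have hint : ∀ z : Fin m → ℝ, (∀ l, 0 ≤ z l) → ∀ x, Integrable (f x) (ν z) := fun z hz x =>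
    have := hprob z hz
    integrable_of_abs_le (hfmeas x) (hC x)
  refine ⟨?_, ?_, ?_, ?_⟩
  · intro x x' z z' hx hz hxx' hzz'
    have hd : ∀ l, 0 ≤ (z' - z) l := fun l => sub_nonneg.2 (hzz' l)
    have := hprob z hz
    have := hprob _ hd
    calc ∫ w, f x w ∂ν z ≤ ∫ w, f x' w ∂ν z := by
          refine integral_mono_ae (hint z hz x) (hint z hz x') ?_
          filter_upwards [hν_nonneg z hz] with w hw
          exact hfmono x x' w w hx hw hxx' le_rfl
      _ ≤ ∫ w, f x' w ∂(ν z ∗ ν (z' - z)) :=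
          integral_le_integral_conv (hν_nonneg z hz) (hν_nonneg _ hd) (hfmeas x') (hC x')
            fun a b ha hb => hfmono x' x' a (a + b) (fun l => (hx l).trans (hxx' l)) ha
              (fun _ => le_rfl) (le_add_of_nonneg_right hb)
      _ = ∫ w, f x' w ∂ν z' := by rw [← hconv z _ hz hd, add_sub_cancel]
  · intro i j x z hx hz h₁ h₂ hh₁ hh₂
    refine integral_second_difference_nonneg (hint z hz _) (hint z hz _) (hint z hz _)
      (hint z hz _) ?_
    filter_upwards [hν_nonneg z hz] with w hw
    exact hconv_xx i j x w hx hw h₁ h₂ hh₁ hh₂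
  · intro i j x z hx hz h₁ h₂ hh₁ hh₂
    have hej := hsingle j hh₂
    have := hprob z hz
    have := hprob _ hej
    rw [hconv z _ hz hej]
    exact integral_conv_cross_difference_nonneg (hν_nonneg z hz) (hν_nonneg _ hej) (hfmeas x)
      (hfmeas _) (hC x) (hC _) fun a b ha hb => hconv_xw i x a hx ha h₁ b hh₁ hb
  · intro i j x z hx hz h₁ h₂ hh₁ hh₂
    have hei := hsingle i hh₁
    have hej := hsingle j hh₂
    have := hprob z hz
    have := hprob _ hei
    have := hprob _ hej
    rw [hconv (z + _) _ (fun l => add_nonneg (hz l) (hei l)) hej, hconv z _ hz hei,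
      hconv z _ hz hej]
    exact integral_conv_conv_second_difference_nonneg (hν_nonneg z hz) (hν_nonneg _ hei)
      (hν_nonneg _ hej) (hfmeas x) (hC x) fun a b c ha hb hc => hconv_ww x a hx ha b c hb hc

/-- Lemma `preservation_PPP`: preservation of monotone (directionally convex)
structure by Poisson functionals. Here `ν z` denotes the law of `⟨g, Π^{(z)}⟩`,
characterized by: it is a probability measure supported on `[0,∞)` and the
superposition property `ν (z + z') = law of (sum of independent samples from
ν z and ν z')` (independent Poisson point processes add intensities). If
`f : [0,∞)^{n+1} → ℝ` (written `f x w` with scalar last coordinate `w`) is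
non-decreasing, bounded and `(i,j)`-convex in all pairs of coordinates, then
`(x,z) ↦ E[f(x, ⟨g,Π^{(z)}⟩)] = ∫ w, f x w ∂(ν z)` is non-decreasing and
`(i,j)`-convex in all pairs of its `n + m` coordinates. -/
theorem stmt_11 (n m : ℕ) (hn : 1 ≤ n) (hm : 1 ≤ m)
    (ν : (Fin m → ℝ) → Measure ℝ)
    (hprob : ∀ z : Fin m → ℝ, (∀ l, 0 ≤ z l) → IsProbabilityMeasure (ν z))
    (hsupp : ∀ z : Fin m → ℝ, (∀ l, 0 ≤ z l) → ν z (Set.Iio 0) = 0)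
    (hadd : ∀ z z' : Fin m → ℝ, (∀ l, 0 ≤ z l) → (∀ l, 0 ≤ z' l) →
      ν (z + z') = Measure.map (fun p : ℝ × ℝ => p.1 + p.2) ((ν z).prod (ν z')))
    (f : (Fin n → ℝ) → ℝ → ℝ)
    (hfmeas : ∀ x, Measurable (f x))
    (hfbdd : ∃ C, ∀ x w, |f x w| ≤ C)
    (hfmono : ∀ x x' : Fin n → ℝ, ∀ w w' : ℝ, (∀ l, 0 ≤ x l) → 0 ≤ w →
      (∀ l, x l ≤ x' l) → w ≤ w' → f x w ≤ f x' w')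
    (hconv_xx : ∀ (i j : Fin n) (x : Fin n → ℝ) (w : ℝ), (∀ l, 0 ≤ x l) → 0 ≤ w →
      ∀ h₁ h₂ : ℝ, 0 ≤ h₁ → 0 ≤ h₂ →
      0 ≤ f (x + Pi.single i h₁ + Pi.single j h₂) w - f (x + Pi.single i h₁) w
            - f (x + Pi.single j h₂) w + f x w)
    (hconv_xw : ∀ (i : Fin n) (x : Fin n → ℝ) (w : ℝ), (∀ l, 0 ≤ x l) → 0 ≤ w →
      ∀ h₁ h₂ : ℝ, 0 ≤ h₁ → 0 ≤ h₂ →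
      0 ≤ f (x + Pi.single i h₁) (w + h₂) - f (x + Pi.single i h₁) w
            - f x (w + h₂) + f x w)
    (hconv_ww : ∀ (x : Fin n → ℝ) (w : ℝ), (∀ l, 0 ≤ x l) → 0 ≤ w →
      ∀ h₁ h₂ : ℝ, 0 ≤ h₁ → 0 ≤ h₂ →
      0 ≤ f x (w + h₁ + h₂) - f x (w + h₁) - f x (w + h₂) + f x w) :
    -- the function (x, z) ↦ ∫ w, f x w ∂(ν z) is non-decreasing …
    (∀ (x x' : Fin n → ℝ) (z z' : Fin m → ℝ),
      (∀ l, 0 ≤ x l) → (∀ l, 0 ≤ z l) → (∀ l, x l ≤ x' l) → (∀ l, z l ≤ z' l) →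
      (∫ w, f x w ∂(ν z)) ≤ ∫ w, f x' w ∂(ν z')) ∧
    -- … (i,j)-convex in the first n coordinates …
    (∀ (i j : Fin n) (x : Fin n → ℝ) (z : Fin m → ℝ),
      (∀ l, 0 ≤ x l) → (∀ l, 0 ≤ z l) → ∀ h₁ h₂ : ℝ, 0 ≤ h₁ → 0 ≤ h₂ →
      0 ≤ (∫ w, f (x + Pi.single i h₁ + Pi.single j h₂) w ∂(ν z))
            - (∫ w, f (x + Pi.single i h₁) w ∂(ν z))
            - (∫ w, f (x + Pi.single j h₂) w ∂(ν z)) + ∫ w, f x w ∂(ν z)) ∧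
    -- … (i, n+j)-convex in mixed coordinates …
    (∀ (i : Fin n) (j : Fin m) (x : Fin n → ℝ) (z : Fin m → ℝ),
      (∀ l, 0 ≤ x l) → (∀ l, 0 ≤ z l) → ∀ h₁ h₂ : ℝ, 0 ≤ h₁ → 0 ≤ h₂ →
      0 ≤ (∫ w, f (x + Pi.single i h₁) w ∂(ν (z + Pi.single j h₂)))
            - (∫ w, f (x + Pi.single i h₁) w ∂(ν z))
            - (∫ w, f x w ∂(ν (z + Pi.single j h₂))) + ∫ w, f x w ∂(ν z)) ∧
    -- … and (n+i, n+j)-convex in the last m coordinates.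
    (∀ (i j : Fin m) (x : Fin n → ℝ) (z : Fin m → ℝ),
      (∀ l, 0 ≤ x l) → (∀ l, 0 ≤ z l) → ∀ h₁ h₂ : ℝ, 0 ≤ h₁ → 0 ≤ h₂ →
      0 ≤ (∫ w, f x w ∂(ν (z + Pi.single i h₁ + Pi.single j h₂)))
            - (∫ w, f x w ∂(ν (z + Pi.single i h₁)))
            - (∫ w, f x w ∂(ν (z + Pi.single j h₂))) + ∫ w, f x w ∂(ν z)) :=
  stmt_11_general n m ν hprob hsupp hadd f hfmeas hfbdd hfmono hconv_xx hconv_xw hconv_ww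
end
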